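/- arXiv:1604.01887 — 2 statements merged into one kernel-verified Lean document; each statement's English description precedes it below -/
import Mathlib

section
/- Let G be a graph of order n ≥ 4. Then μ_{n−1}(G) = ⌊λ(G)/(n−1)⌋, where λ(G) is the edge-connectivity of G. -/
open SimpleGraph

/-- A pendant `S`-Steiner tree in `G`: a subgraph `T` of `G` that is a tree,
contains `S`, and in which every vertex of `S` has degree 1. -/
def IsPendantSTree {V : Type*} (G : SimpleGraph V) (S : Set V) (T : G.Subgraph) : Prop :=
  S ⊆ T.verts ∧ T.coe.IsTree ∧ ∀ v ∈ S, (T.neighborSet v).ncard = 1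

/-- A family of pairwise internally disjoint pendant `S`-Steiner trees. -/
def IsIntDisjointFamily {V : Type*} (G : SimpleGraph V) (S : Set V)
    (F : Finset G.Subgraph) : Prop :=
  (∀ T ∈ F, IsPendantSTree G S T) ∧
  ∀ T ∈ F, ∀ T' ∈ F, T ≠ T' →
    T.edgeSet ∩ T'.edgeSet = ∅ ∧ T.verts ∩ T'.verts = S

/-- A family of pairwise edge-disjoint pendant `S`-Steiner trees. -/
def IsEdgeDisjointFamily {V : Type*} (G : SimpleGraph V) (S : Set V)
    (F : Finset G.Subgraph) : Prop :=
  (∀ T ∈ F, IsPendantSTree G S T) ∧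
  ∀ T ∈ F, ∀ T' ∈ F, T ≠ T' → T.edgeSet ∩ T'.edgeSet = ∅

/-- `τ(S)`: the maximum number of pairwise internally disjoint pendant `S`-Steiner trees. -/
noncomputable def tauLocal {V : Type*} (G : SimpleGraph V) (S : Set V) : ℕ :=
  sSup {n | ∃ F : Finset G.Subgraph, F.card = n ∧ IsIntDisjointFamily G S F}

/-- Pendant-tree `k`-connectivity `τ_k(G)`. -/
noncomputable def tau {V : Type*} (G : SimpleGraph V) (k : ℕ) : ℕ :=
  sInf {n | ∃ S : Finset V, S.card = k ∧ tauLocal G ↑S = n}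

/-- `μ(S)`: the maximum number of pairwise edge-disjoint pendant `S`-Steiner trees. -/
noncomputable def muLocal {V : Type*} (G : SimpleGraph V) (S : Set V) : ℕ :=
  sSup {n | ∃ F : Finset G.Subgraph, F.card = n ∧ IsEdgeDisjointFamily G S F}

/-- Pendant-tree `k`-edge-connectivity `μ_k(G)`. -/
noncomputable def mu {V : Type*} (G : SimpleGraph V) (k : ℕ) : ℕ :=
  sInf {n | ∃ S : Finset V, S.card = k ∧ muLocal G ↑S = n}

/-- Vertex connectivity (cut version): the least size of a vertex set whose removal
disconnects the graph or leaves at most one vertex. -/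
noncomputable def kappa {V : Type*} [Fintype V] (G : SimpleGraph V) : ℕ :=
  sInf {n | ∃ S : Finset V, S.card = n ∧
    (¬ ((⊤ : G.Subgraph).deleteVerts ↑S).coe.Connected ∨ Fintype.card V - S.card ≤ 1)}

/-- Edge connectivity: the least size of an edge set whose removal disconnects the graph. -/
noncomputable def edgeConn {V : Type*} (G : SimpleGraph V) : ℕ :=
  sInf {n | ∃ F : Finset (Sym2 V), F.card = n ∧ ↑F ⊆ G.edgeSet ∧
    ¬ (G.deleteEdges ↑F).Connected}

/-- Edges of `G` with one endpoint in `S` and the other outside `S`. -/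
def crossEdges {V : Type*} (G : SimpleGraph V) (S : Set V) : Set (Sym2 V) :=
  {e | e ∈ G.edgeSet ∧ ∃ u v, e = s(u, v) ∧ u ∈ S ∧ v ∉ S}

/-!
For `S = V ∖ {v}` with `|S| ≥ 3`, a pendant `S`-Steiner tree has no edge inside `S`: an edge
`sw` between two leaves would be a whole component of the tree. So every vertex of `S` is a leaf
hanging at `v`, the tree is the star at `v`, and two such trees share every edge. Hence `μ(S)` is
`1` if `v` is adjacent to all other vertices and `0` otherwise, and `μ_{n-1}(G)` is `1` for
`G = Kₙ` and `0` otherwise. On the other side `λ(G) ≤ δ(G) ≤ n - 1`, with `δ(G) ≤ n - 2` unless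
`G = Kₙ`, while a disconnecting edge set of `Kₙ` contains all `c (n - c) ≥ n - 1` edges across
some cut.
-/

open Finset

namespace SimpleGraph

theorem Reachable.mem_of_adj_closed {W : Type*} {H : SimpleGraph W} {s : Set W}
    (hs : ∀ ⦃x y⦄, H.Adj x y → x ∈ s → y ∈ s) {a b : W} (h : H.Reachable a b) (ha : a ∈ s) :
    b ∈ s := by
  obtain ⟨p⟩ := h
  induction p with
  | nil => exact ha
  | cons hxy _ ih => exact ih (hs hxy ha)

theorem starGraph_le_of_isUniversal {V : Type*} {G : SimpleGraph V} {v : V}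
    (hv : G.IsUniversal v) : starGraph v ≤ G := by
  rintro x y h
  rw [starGraph_adj] at h
  obtain ⟨hxy, rfl | rfl⟩ := h
  · exact hv hxy
  · exact (hv hxy.symm).symm

end SimpleGraph

theorem Finset.exists_eq_compl_singleton_of_card_eq {V : Type*} [Fintype V] [DecidableEq V]
    [Nonempty V] {S : Finset V} (hS : #S = Fintype.card V - 1) : ∃ v, S = {v}ᶜ := by
  have hSc : #Sᶜ = 1 := by
    rw [card_compl, hS]
    have := Fintype.card_pos (α := V)
    omega
  obtain ⟨v, hv⟩ := card_eq_one.mp hSc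
  exact ⟨v, by rw [← hv, compl_compl]⟩

theorem Finset.card_mul_card_compl_le {V : Type*} [Fintype V] [DecidableEq V] {C : Finset V}
    {F : Finset (Sym2 V)} (h : ∀ a ∈ C, ∀ b ∉ C, s(a, b) ∈ F) : #C * #Cᶜ ≤ #F := by
  rw [← card_product]
  refine card_le_card_of_injOn (fun p => s(p.1, p.2)) (fun p hp => ?_) (fun p hp q hq hpq => ?_)
  · simp only [coe_product, Set.mem_prod, mem_coe, mem_compl] at hp
    exact h _ hp.1 _ hp.2
  · simp only [coe_product, Set.mem_prod, mem_coe, mem_compl] at hp hq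
    rcases Sym2.eq_iff.mp hpq with ⟨h1, h2⟩ | ⟨h1, -⟩
    · exact Prod.ext h1 h2
    · exact absurd (h1 ▸ hp.1) hq.2

section PendantTree

variable {V : Type*} {G : SimpleGraph V} {T : G.Subgraph} {v : V}

theorem IsPendantSTree.neighborSet_eq_singleton {S : Set V} (hT : IsPendantSTree G S T)
    {s w : V} (hs : s ∈ S) (hsw : T.Adj s w) : T.neighborSet s = {w} := by
  obtain ⟨x, hx⟩ := Set.ncard_eq_one.mp (hT.2.2 s hs)
  have hwx : w ∈ T.neighborSet s := hsw
  rw [hx, Set.mem_singleton_iff] at hwx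
  rw [hx, hwx]

theorem IsPendantSTree.subset_pair_of_adj {S : Set V} (hT : IsPendantSTree G S T) {s w : V}
    (hs : s ∈ S) (hw : w ∈ S) (hsw : T.Adj s w) : S ⊆ {s, w} := by
  have hns := hT.neighborSet_eq_singleton hs hsw
  have hnw := hT.neighborSet_eq_singleton hw hsw.symm
  intro t ht
  have hreach : T.coe.Reachable ⟨s, hT.1 hs⟩ ⟨t, hT.1 ht⟩ := hT.2.1.connected.preconnected _ _
  refine hreach.mem_of_adj_closed (s := {x | x.1 ∈ ({s, w} : Set V)}) ?_ (by simp)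
  intro x y hxy hx
  have hy : y.1 ∈ T.neighborSet x.1 := hxy
  rcases hx with hx | hx
  · rw [hx, hns, Set.mem_singleton_iff] at hy
    exact Or.inr hy
  · rw [hx, hnw, Set.mem_singleton_iff] at hy
    exact Or.inl hy

theorem isPendantSTree_starGraph (hv : G.IsUniversal v) :
    IsPendantSTree G {v}ᶜ (toSubgraph (starGraph v) (starGraph_le_of_isUniversal hv)) := by
  refine ⟨fun _ _ => trivial, ?_, fun s hs => ?_⟩
  · exact (Iso.isTree_iff (Subgraph.spanningCoeEquivCoeOfSpanning _
      (toSubgraph.isSpanning _ _))).mp (isTree_starGraph v)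
  · have hs' : s ≠ v := hs
    have : (toSubgraph (starGraph v) (starGraph_le_of_isUniversal hv)).neighborSet s = {v} := by
      ext y
      show (starGraph v).Adj s y ↔ _
      simp only [starGraph_adj, hs', false_or, Set.mem_singleton_iff]
      exact ⟨And.right, fun hy => ⟨hy ▸ hs', hy⟩⟩
    rw [this, Set.ncard_singleton]

variable [Fintype V]

theorem IsPendantSTree.neighborSet_eq_center (hn : 4 ≤ Fintype.card V)
    (hT : IsPendantSTree G {v}ᶜ T) {s : V} (hs : s ≠ v) : T.neighborSet s = {v} := by
  classical
  obtain ⟨w, hw⟩ := Set.ncard_eq_one.mp (hT.2.2 s hs)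
  obtain rfl | hwv := eq_or_ne w v
  · exact hw
  have hsw : T.Adj s w := by
    rw [← Subgraph.mem_neighborSet, hw]
    rfl
  have hsub := hT.subset_pair_of_adj hs hwv hsw
  obtain ⟨t, -, ht⟩ := exists_mem_notMem_of_card_lt_card (s := {s, w, v}) (t := univ)
    (card_le_three.trans_lt (by rw [card_univ]; omega))
  simp only [mem_insert, mem_singleton, not_or] at ht
  simpa [ht.1, ht.2.1] using hsub (Set.mem_compl_singleton_iff.mpr ht.2.2)

theorem IsPendantSTree.adj_center (hn : 4 ≤ Fintype.card V) (hT : IsPendantSTree G {v}ᶜ T)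
    {s : V} (hs : s ≠ v) : T.Adj s v := by
  rw [← Subgraph.mem_neighborSet, hT.neighborSet_eq_center hn hs]
  rfl

theorem IsEdgeDisjointFamily.card_le_one (hn : 4 ≤ Fintype.card V) {F : Finset G.Subgraph}
    (hF : IsEdgeDisjointFamily G {v}ᶜ F) : #F ≤ 1 := by
  have : Nontrivial V := Fintype.one_lt_card_iff_nontrivial.mp (by omega)
  obtain ⟨s, hs⟩ := exists_ne v
  refine Finset.card_le_one.mpr fun T hT T' hT' => by_contra fun hne => ?_
  have hshared : s(s, v) ∈ T.edgeSet ∩ T'.edgeSet :=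
    ⟨(hF.1 T hT).adj_center hn hs, (hF.1 T' hT').adj_center hn hs⟩
  simp [hF.2 T hT T' hT' hne] at hshared

theorem muLocal_compl_singleton_of_isUniversal (hn : 4 ≤ Fintype.card V)
    (hv : G.IsUniversal v) : muLocal G {v}ᶜ = 1 := by
  have hbdd : 1 ∈ upperBounds {n | ∃ F : Finset G.Subgraph, #F = n ∧
      IsEdgeDisjointFamily G {v}ᶜ F} := by
    rintro _ ⟨F, rfl, hF⟩
    exact hF.card_le_one hn
  have hstar : IsEdgeDisjointFamily G {v}ᶜ
      {toSubgraph (starGraph v) (starGraph_le_of_isUniversal hv)} :=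
    ⟨by simpa using isPendantSTree_starGraph hv, by simp⟩
  exact le_antisymm (csSup_le' hbdd) (le_csSup ⟨1, hbdd⟩ ⟨_, card_singleton _, hstar⟩)

theorem muLocal_compl_singleton_of_not_isUniversal (hn : 4 ≤ Fintype.card V)
    (hv : ¬ G.IsUniversal v) : muLocal G {v}ᶜ = 0 := by
  obtain ⟨u, hvu, hnadj⟩ : ∃ u, v ≠ u ∧ ¬ G.Adj v u := by simpa [IsUniversal] using hv
  refine Nat.eq_zero_of_le_zero (csSup_le' ?_)
  rintro _ ⟨F, rfl, hF⟩
  rw [Nat.le_zero, card_eq_zero, eq_empty_iff_forall_notMem]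
  exact fun T hT => hnadj ((hF.1 T hT).adj_center hn hvu.symm).adj_sub.symm

end PendantTree

theorem mu_card_sub_one_eq_iInf {V : Type*} [Fintype V] [Nonempty V] (G : SimpleGraph V) :
    mu G (Fintype.card V - 1) = ⨅ v, muLocal G {v}ᶜ := by
  classical
  rw [mu, iInf]
  congr 1
  ext n
  constructor
  · rintro ⟨S, hS, rfl⟩
    obtain ⟨v, rfl⟩ := S.exists_eq_compl_singleton_of_card_eq hS
    exact ⟨v, by simp⟩
  · rintro ⟨v, rfl⟩
    exact ⟨{v}ᶜ, by simp [card_compl], by simp⟩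

section EdgeCut

variable {V : Type*}

def IsEdgeCut (G : SimpleGraph V) (F : Finset (Sym2 V)) : Prop :=
  ↑F ⊆ G.edgeSet ∧ ¬ (G.deleteEdges ↑F).Connected

theorem edgeConn_le_card {G : SimpleGraph V} {F : Finset (Sym2 V)} (hF : IsEdgeCut G F) :
    edgeConn G ≤ #F :=
  Nat.sInf_le ⟨F, rfl, hF⟩

theorem isEdgeCut_incidenceFinset [Fintype V] [DecidableEq V] [Nontrivial V]
    (G : SimpleGraph V) [DecidableRel G.Adj] (u : V) : IsEdgeCut G (G.incidenceFinset u) := by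
  obtain ⟨w, hw⟩ := exists_ne u
  refine ⟨by simpa using G.incidenceSet_subset u, fun hconn => ?_⟩
  refine not_reachable_of_neighborSet_left_eq_empty hw.symm ?_ (hconn.preconnected u w)
  ext x
  simp [incidenceSet]

theorem exists_isEdgeCut_card_eq_edgeConn [Fintype V] [Nontrivial V] (G : SimpleGraph V) :
    ∃ F, IsEdgeCut G F ∧ #F = edgeConn G := by
  classical
  obtain ⟨F, hF, hcut⟩ := Nat.sInf_mem (s := {n | ∃ F, #F = n ∧ IsEdgeCut G F})
    ⟨_, _, rfl, isEdgeCut_incidenceFinset G (Classical.arbitrary V)⟩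
  exact ⟨F, hcut, hF⟩

theorem edgeConn_le_degree [Fintype V] [Nontrivial V] (G : SimpleGraph V) [DecidableRel G.Adj]
    (u : V) : edgeConn G ≤ G.degree u := by
  classical
  simpa using edgeConn_le_card (isEdgeCut_incidenceFinset G u)

theorem card_sub_one_le_card_of_isEdgeCut_top [Fintype V] {F : Finset (Sym2 V)}
    (hF : IsEdgeCut ⊤ F) : Fintype.card V - 1 ≤ #F := by
  classical
  cases isEmpty_or_nonempty V
  · simp
  set H := (⊤ : SimpleGraph V).deleteEdges ↑F
  obtain ⟨u, w, huw⟩ : ∃ u w, ¬ H.Reachable u w := by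
    by_contra! h
    exact hF.2 ⟨h⟩
  set C := univ.filter (H.Reachable u)
  have hcross : ∀ a ∈ C, ∀ b ∉ C, s(a, b) ∈ F := by
    intro a ha b hb
    simp only [C, mem_filter, mem_univ, true_and] at ha hb
    by_contra hab
    have hne : a ≠ b := fun h => hb (h ▸ ha)
    exact hb (ha.trans (Adj.reachable (by simpa [H, hne] using hab)))
  have hu : 0 < #C := card_pos.mpr ⟨u, by simp [C]⟩
  have hw : 0 < #Cᶜ := card_pos.mpr ⟨w, by simpa [C] using huw⟩
  have hsum := card_add_card_compl C
  have hmul := card_mul_card_compl_le hcross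
  have : #C + #Cᶜ ≤ #C * #Cᶜ + 1 := by nlinarith
  omega

theorem edgeConn_top [Fintype V] [Nontrivial V] :
    edgeConn (⊤ : SimpleGraph V) = Fintype.card V - 1 := by
  classical
  refine le_antisymm ?_ ?_
  · simpa using edgeConn_le_degree ⊤ (Classical.arbitrary V)
  · obtain ⟨F, hF, hcard⟩ := exists_isEdgeCut_card_eq_edgeConn (⊤ : SimpleGraph V)
    exact hcard ▸ card_sub_one_le_card_of_isEdgeCut_top hF

end EdgeCut

/-- μ_{n-1}(G) = ⌊λ(G)/(n-1)⌋. -/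
theorem mu_card_sub_one {V : Type*} [Fintype V] (G : SimpleGraph V)
    (hn : 4 ≤ Fintype.card V) :
    mu G (Fintype.card V - 1) = edgeConn G / (Fintype.card V - 1) := by
  classical
  have : Nontrivial V := Fintype.one_lt_card_iff_nontrivial.mp (by omega)
  rw [mu_card_sub_one_eq_iInf]
  obtain rfl | hG := eq_or_ne G ⊤
  · simp only [muLocal_compl_singleton_of_isUniversal hn IsUniversal.top, ciInf_const]
    rw [edgeConn_top, Nat.div_self (by omega)]
  · obtain ⟨v, hv⟩ : ∃ v, ¬ G.IsUniversal v := by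
      simpa [eq_top_iff_forall_isUniversal] using hG
    have hlt : edgeConn G < Fintype.card V - 1 :=
      (edgeConn_le_degree G v).trans_lt ((G.degree_lt_card_sub_one v).mpr hv)
    rw [Nat.div_eq_of_lt hlt, ← Nat.le_zero, ← muLocal_compl_singleton_of_not_isUniversal hn hv]
    exact ciInf_le (OrderBot.bddBelow _) v
end

section
/- For the complete bipartite graph K_{a,b} with 2 ≤ a ≤ b, the pendant-tree 3-connectivity satisfies τ_3(K_{a,b}) = a − 2. -/
open SimpleGraph

/-!
In a pendant `S`-Steiner tree with `|S| ≥ 3` no two vertices of `S` are adjacent: two adjacent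
leaves would make up the whole tree. So for `s ∈ S`, internally disjoint trees attach `s` to
pairwise distinct neighbours outside `S`; for `S = {x₀, x₁, z}` with `x₀, x₁` on the side of size
`a` this leaves at most `a - 2` trees. Conversely, every 3-set `S` of `K_{a,b}` carries `a - 2`
internally disjoint trees: stars centred on the other side if `S` lies on one side, and otherwise,
writing `S = {z} ∪ W` with `W` on one side, double stars `z - c₁ - c₂ - W` with `c₁ ∉ W` on the
side of `W` and `c₂ ≠ z` on the side of `z`; as `a ≤ b` there are enough centres.
-/

namespace SimpleGraph

variable {V : Type*}

theorem isAcyclic_of_neighborSet_subsingleton {H : SimpleGraph V} {c₁ c₂ : V}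
    (h : ∀ w, w ≠ c₁ → w ≠ c₂ → (H.neighborSet w).Subsingleton) : H.IsAcyclic := by
  classical
  -- A vertex of a cycle has two distinct neighbours on it, so the cycle runs inside `{c₁, c₂}`,
  -- where its base point cannot have two distinct neighbours.
  intro v c hc
  have hcentre : ∀ w ∈ c.support, w = c₁ ∨ w = c₂ := by
    intro w hw
    by_contra! hne
    have hc' := hc.rotate hw
    exact hc'.snd_ne_penultimate <| h w hne.1 hne.2
      (Walk.adj_snd hc'.not_nil) (Walk.adj_penultimate hc'.not_nil).symm
  have hsnd := hcentre _ (c.getVert_mem_support 1)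
  have hpen := hcentre _ (c.getVert_mem_support (c.length - 1))
  have hv := hcentre _ c.start_mem_support
  have hvsnd := (Walk.adj_snd hc.not_nil).ne
  have hvpen := (Walk.adj_penultimate hc.not_nil).ne
  exact hc.snd_ne_penultimate (by grind)

theorem Connected.eq_or_eq_of_forall_adj_eq {H : SimpleGraph V} (hH : H.Connected) {u v : V}
    (hu : ∀ x, H.Adj u x → x = v) (hv : ∀ x, H.Adj v x → x = u) (w : V) : w = u ∨ w = v := by
  have hclosed : ∀ x ∈ ({u, v} : Set V), ∀ y, H.Adj x y → y ∈ ({u, v} : Set V) := by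
    rintro x (rfl | rfl) y hy
    exacts [Or.inr (hu y hy), Or.inl (hv y hy)]
  simpa using (hH u w).mem_subgraphVerts (H := (⊤ : H.Subgraph).induce {u, v})
    (fun x hx y hy => ⟨hx, hclosed x hx y hy, hy⟩) (by simp)

namespace Subgraph

variable {G : SimpleGraph V}

theorem isAcyclic_coe_of_neighborSet_subsingleton {H : G.Subgraph} {c₁ c₂ : V}
    (h₁ : c₁ ∈ H.verts) (h₂ : c₂ ∈ H.verts)
    (h : ∀ w, w ≠ c₁ → w ≠ c₂ → (H.neighborSet w).Subsingleton) : H.coe.IsAcyclic :=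
  isAcyclic_of_neighborSet_subsingleton (c₁ := ⟨c₁, h₁⟩) (c₂ := ⟨c₂, h₂⟩)
    fun w hw₁ hw₂ _ hx _ hy =>
      Subtype.ext (h w (fun e => hw₁ (Subtype.ext e)) (fun e => hw₂ (Subtype.ext e)) hx hy)

end Subgraph

def starSubgraph (G : SimpleGraph V) (c : V) (L : Set V) : G.Subgraph where
  verts := insert c L
  Adj v w := G.Adj v w ∧ (v = c ∧ w ∈ L ∨ w = c ∧ v ∈ L)
  adj_sub := And.left
  edge_vert := by
    rintro v w ⟨-, ⟨rfl, -⟩ | ⟨-, hv⟩⟩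
    exacts [Set.mem_insert _ _, Set.mem_insert_of_mem _ hv]
  symm := ⟨fun _ _ h => ⟨h.1.symm, h.2.symm⟩⟩

def doubleStarSubgraph (G : SimpleGraph V) (c₁ c₂ : V) (L₁ L₂ : Set V) : G.Subgraph :=
  starSubgraph G c₁ (insert c₂ L₁) ⊔ starSubgraph G c₂ L₂

variable {G : SimpleGraph V}

section Star

variable {c : V} {L : Set V}

@[simp] theorem starSubgraph_verts : (starSubgraph G c L).verts = insert c L := rfl

theorem starSubgraph_neighborSet_of_ne (hL : ∀ l ∈ L, G.Adj c l) {v : V} (hv : v ≠ c) :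
    (starSubgraph G c L).neighborSet v = {x | x = c ∧ v ∈ L} := by
  ext x
  simp only [Subgraph.mem_neighborSet, starSubgraph, Set.mem_ofPred_eq]
  constructor
  · rintro ⟨-, ⟨rfl, -⟩ | h⟩
    exacts [absurd rfl hv, h]
  · rintro ⟨rfl, h⟩
    exact ⟨(hL v h).symm, Or.inr ⟨rfl, h⟩⟩

theorem starSubgraph_neighborSet_of_mem (hL : ∀ l ∈ L, G.Adj c l) {l : V} (hl : l ∈ L) :
    (starSubgraph G c L).neighborSet l = {c} := by
  rw [starSubgraph_neighborSet_of_ne hL (hL l hl).ne']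
  simp [hl]

theorem starSubgraph_connected (hL : ∀ l ∈ L, G.Adj c l) : (starSubgraph G c L).Connected := by
  rw [Subgraph.connected_iff', connected_iff_exists_forall_reachable]
  refine ⟨⟨c, Set.mem_insert _ _⟩, ?_⟩
  rintro ⟨v, rfl | hv⟩
  · rfl
  · exact Adj.reachable (show (starSubgraph G c L).Adj c v from ⟨hL v hv, Or.inl ⟨rfl, hv⟩⟩)

theorem isPendantSTree_starSubgraph (hL : ∀ l ∈ L, G.Adj c l) :
    IsPendantSTree G L (starSubgraph G c L) := by
  refine ⟨Set.subset_insert _ _, ⟨(starSubgraph_connected hL).coe, ?_⟩, fun l hl => ?_⟩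
  · refine Subgraph.isAcyclic_coe_of_neighborSet_subsingleton (Set.mem_insert c L)
      (Set.mem_insert c L) fun w hw _ => ?_
    rw [starSubgraph_neighborSet_of_ne hL hw]
    exact fun x hx y hy => hx.1.trans hy.1.symm
  · rw [starSubgraph_neighborSet_of_mem hL hl, Set.ncard_singleton]

end Star

section DoubleStar

variable {c₁ c₂ : V} {L₁ L₂ : Set V}

theorem doubleStarSubgraph_verts :
    (doubleStarSubgraph G c₁ c₂ L₁ L₂).verts = {c₁, c₂} ∪ (L₁ ∪ L₂) := by
  ext v
  simp only [doubleStarSubgraph, Subgraph.verts_sup, starSubgraph_verts, Set.mem_union,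
    Set.mem_insert_iff, Set.mem_singleton_iff]
  tauto

theorem isPendantSTree_doubleStarSubgraph (h : G.Adj c₁ c₂) (hL₁ : ∀ l ∈ L₁, G.Adj c₁ l)
    (hL₂ : ∀ l ∈ L₂, G.Adj c₂ l) (hc₂ : c₂ ∉ L₁) (hc₁ : c₁ ∉ L₂) (hL : Disjoint L₁ L₂) :
    IsPendantSTree G (L₁ ∪ L₂) (doubleStarSubgraph G c₁ c₂ L₁ L₂) := by
  have hL₁' : ∀ l ∈ insert c₂ L₁, G.Adj c₁ l := Set.forall_mem_insert.2 ⟨h, hL₁⟩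
  have hnbr : ∀ v, v ≠ c₁ → v ≠ c₂ → (doubleStarSubgraph G c₁ c₂ L₁ L₂).neighborSet v =
      {x | x = c₁ ∧ v ∈ L₁} ∪ {x | x = c₂ ∧ v ∈ L₂} := by
    intro v hv₁ hv₂
    rw [doubleStarSubgraph, Subgraph.neighborSet_sup, starSubgraph_neighborSet_of_ne hL₁' hv₁,
      starSubgraph_neighborSet_of_ne hL₂ hv₂]
    simp [hv₂]
  refine ⟨?_, ⟨?_, ?_⟩, ?_⟩
  · rw [doubleStarSubgraph_verts]
    exact Set.subset_union_right
  · refine (Subgraph.connected_sup (starSubgraph_connected hL₁').preconnected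
      (starSubgraph_connected hL₂).preconnected ⟨c₂, ?_, Set.mem_insert _ _⟩).coe
    exact Set.mem_insert_of_mem _ (Set.mem_insert _ _)
  · refine Subgraph.isAcyclic_coe_of_neighborSet_subsingleton (c₁ := c₁) (c₂ := c₂)
      (by simp [doubleStarSubgraph_verts]) (by simp [doubleStarSubgraph_verts])
      fun w hw₁ hw₂ => ?_
    rw [hnbr w hw₁ hw₂]
    rintro x (⟨rfl, hx⟩ | ⟨rfl, hx⟩) y (⟨rfl, hy⟩ | ⟨rfl, hy⟩)
    · rfl
    · exact absurd hy (Set.disjoint_left.1 hL hx)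
    · exact absurd hx (Set.disjoint_left.1 hL hy)
    · rfl
  · rintro l (hl | hl)
    · rw [hnbr l (hL₁ l hl).ne' (fun e => hc₂ (e ▸ hl))]
      simp [hl, Set.disjoint_left.1 hL hl]
    · rw [hnbr l (fun e => hc₁ (e ▸ hl)) (hL₂ l hl).ne']
      simp [hl, Set.disjoint_right.1 hL hl]

end DoubleStar

end SimpleGraph

section PendantTree

variable {V : Type*} {G : SimpleGraph V} {S : Set V} {T : G.Subgraph}

theorem IsPendantSTree.eq_of_adj (hT : IsPendantSTree G S T) {u v w : V} (hu : u ∈ S)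
    (hv : T.Adj u v) (hw : T.Adj u w) : w = v := by
  obtain ⟨x, hx⟩ := Set.ncard_eq_one.1 (hT.2.2 u hu)
  have hv' : v ∈ T.neighborSet u := hv
  have hw' : w ∈ T.neighborSet u := hw
  rw [hx] at hv' hw'
  exact hw'.trans hv'.symm

theorem IsPendantSTree.exists_adj (hT : IsPendantSTree G S T) {u : V} (hu : u ∈ S) :
    ∃ v, T.Adj u v := by
  obtain ⟨x, hx⟩ := Set.ncard_eq_one.1 (hT.2.2 u hu)
  exact ⟨x, (hx ▸ rfl : x ∈ T.neighborSet u)⟩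

theorem IsPendantSTree.not_adj (hT : IsPendantSTree G S T) (hS : 2 < S.ncard) {u v : V}
    (hu : u ∈ S) (hv : v ∈ S) : ¬ T.Adj u v := by
  intro huv
  obtain ⟨w, hwS, hw⟩ := Set.exists_mem_notMem_of_ncard_lt_ncard (s := {u, v}) (t := S)
    ((Set.ncard_insert_le _ _).trans_lt (by rw [Set.ncard_singleton]; omega))
  have := hT.2.1.connected.eq_or_eq_of_forall_adj_eq (u := ⟨u, hT.1 hu⟩) (v := ⟨v, hT.1 hv⟩)
    (fun x hx => Subtype.ext (hT.eq_of_adj hu huv hx))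
    (fun x hx => Subtype.ext (hT.eq_of_adj hv huv.symm hx)) ⟨w, hT.1 hwS⟩
  simp only [Subtype.ext_iff] at this
  exact hw (by simpa using this)

theorem IsPendantSTree.verts_ne (hT : IsPendantSTree G S T) (hS : 2 < S.ncard) :
    T.verts ≠ S := by
  intro h
  obtain ⟨u, hu⟩ := Set.nonempty_of_ncard_ne_zero (by omega : S.ncard ≠ 0)
  obtain ⟨v, huv⟩ := hT.exists_adj hu
  exact hT.not_adj hS hu (h ▸ T.edge_vert huv.symm) huv

theorem IsPendantSTree.edgeSet_inter_eq_empty {T' : G.Subgraph} (hT : IsPendantSTree G S T)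
    (hS : 2 < S.ncard) (hverts : T.verts ∩ T'.verts = S) : T.edgeSet ∩ T'.edgeSet = ∅ := by
  refine Set.eq_empty_of_forall_notMem fun e ⟨he, he'⟩ => ?_
  induction e using Sym2.ind with
  | _ u v =>
    have hu : u ∈ S := hverts ▸ ⟨T.edge_vert he, T'.edge_vert he'⟩
    have hv : v ∈ S := hverts ▸ ⟨T.edge_vert he.symm, T'.edge_vert he'.symm⟩
    exact hT.not_adj hS hu hv he

theorem IsIntDisjointFamily.card_le_tauLocal [Finite V] {F : Finset G.Subgraph}
    (hF : IsIntDisjointFamily G S F) : F.card ≤ tauLocal G S :=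
  le_csSup ⟨Nat.card G.Subgraph, by
    rintro n ⟨F', rfl, -⟩
    exact Set.ncard_coe_finset F' ▸ Set.ncard_le_card _⟩ ⟨F, rfl, hF⟩

theorem tauLocal_le {m : ℕ} (h : ∀ F : Finset G.Subgraph, IsIntDisjointFamily G S F → F.card ≤ m) :
    tauLocal G S ≤ m :=
  csSup_le ⟨0, ∅, rfl, by simp [IsIntDisjointFamily]⟩ fun _ ⟨F, hF, hFS⟩ => hF ▸ h F hFS

theorem card_le_tauLocal_of_pairwiseDisjoint [Finite V] (hS : 2 < S.ncard) {ι : Type*}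
    (s : Finset ι) (T : ι → G.Subgraph) (X : ι → Set V) (hT : ∀ i ∈ s, IsPendantSTree G S (T i))
    (hverts : ∀ i ∈ s, (T i).verts = X i ∪ S) (hX : (s : Set ι).PairwiseDisjoint X) :
    s.card ≤ tauLocal G S := by
  classical
  have hinter : ∀ i ∈ s, ∀ j ∈ s, i ≠ j → (T i).verts ∩ (T j).verts = S := by
    intro i hi j hj hij
    rw [hverts i hi, hverts j hj, ← Set.inter_union_distrib_right, (hX hi hj hij).inter_eq,
      Set.empty_union]
  have hinj : Set.InjOn T s := fun i hi j hj hij => by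
    by_contra hne
    exact (hT i hi).verts_ne hS (by simpa [hij] using hinter i hi j hj hne)
  rw [← Finset.card_image_of_injOn hinj]
  refine IsIntDisjointFamily.card_le_tauLocal ⟨by simpa using hT, ?_⟩
  simp only [Finset.mem_image]
  rintro _ ⟨i, hi, rfl⟩ _ ⟨j, hj, rfl⟩ hne
  have hij : i ≠ j := fun h => hne (h ▸ rfl)
  exact ⟨(hT i hi).edgeSet_inter_eq_empty hS (hinter i hi j hj hij), hinter i hi j hj hij⟩

theorem IsIntDisjointFamily.card_le_ncard_neighborSet_diff {F : Finset G.Subgraph}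
    (hF : IsIntDisjointFamily G S F) (hS : 2 < S.ncard) {s : V} (hs : s ∈ S)
    (hfin : (G.neighborSet s \ S).Finite) : F.card ≤ (G.neighborSet s \ S).ncard := by
  have : Nonempty V := ⟨s⟩
  choose! φ hφ using fun T hT => (hF.1 T hT).exists_adj hs
  rw [← Set.ncard_coe_finset]
  refine Set.ncard_le_ncard_of_injOn φ (fun T hT => ⟨T.adj_sub (hφ T hT), fun hmem =>
    (hF.1 T hT).not_adj hS hs hmem (hφ T hT)⟩) (fun T hT T' hT' heq => ?_) hfin
  by_contra hne
  have hmem : φ T ∈ T.verts ∩ T'.verts :=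
    ⟨T.edge_vert (hφ T hT).symm, heq ▸ T'.edge_vert (hφ T' hT').symm⟩
  rw [(hF.2 T hT T' hT' hne).2] at hmem
  exact (hF.1 T hT).not_adj hS hs hmem (hφ T hT)

end PendantTree

theorem tau_eq_of_forall_le_tauLocal {V : Type*} {G : SimpleGraph V} {k m : ℕ}
    (hle : ∀ S : Finset V, S.card = k → m ≤ tauLocal G S) {S₀ : Finset V} (hS₀ : S₀.card = k)
    (hS₀le : tauLocal G S₀ ≤ m) : tau G k = m := by
  have heq : tauLocal G S₀ = m := le_antisymm hS₀le (hle S₀ hS₀)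
  exact le_antisymm (Nat.sInf_le ⟨S₀, hS₀, heq⟩)
    (le_csInf ⟨m, S₀, hS₀, heq⟩ fun _ ⟨S, hS, hSm⟩ => hSm ▸ hle S hS)

section Bicliques

variable {V : Type*} [Finite V] {G : SimpleGraph V}

theorem card_le_tauLocal_of_forall_adj {S : Set V} (hS : 2 < S.ncard) (C : Finset V)
    (hC : ∀ c ∈ C, ∀ s ∈ S, G.Adj c s) : C.card ≤ tauLocal G S :=
  card_le_tauLocal_of_pairwiseDisjoint hS C (fun c => starSubgraph G c S) (fun c => {c})
    (fun c hc => isPendantSTree_starSubgraph (hC c hc)) (fun c _ => Set.insert_eq c S)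
    (by simp)

theorem le_tauLocal_of_biclique {A B S : Finset V} (hAB : ∀ x ∈ A, ∀ y ∈ B, G.Adj x y)
    (hS : 3 ≤ S.card) {z : V} (hzS : z ∈ S) (hzB : z ∈ B) (hSA : ∀ s ∈ S, s ≠ z → s ∈ A) :
    min (A.card + 1 - S.card) (B.card - 1) ≤ tauLocal G S := by
  classical
  set n := min (A.card + 1 - S.card) (B.card - 1)
  have hne : ∀ x ∈ A, ∀ y ∈ B, x ≠ y := fun x hx y hy => (hAB x hx y hy).ne
  have hSinterA : S ∩ A = S.erase z := by
    ext x
    simp only [Finset.mem_inter, Finset.mem_erase]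
    exact ⟨fun ⟨hx, hxA⟩ => ⟨fun h => hne x hxA z hzB h, hx⟩, fun ⟨h, hx⟩ => ⟨hx, hSA x hx h⟩⟩
  obtain ⟨f⟩ : Nonempty (Fin n ↪ ↥(A \ S)) := Function.Embedding.nonempty_of_card_le <| by
    simp [n, Finset.card_sdiff, hSinterA, Finset.card_erase_of_mem hzS]
    omega
  obtain ⟨g⟩ : Nonempty (Fin n ↪ ↥(B.erase z)) :=
    Function.Embedding.nonempty_of_card_le (by simp [n, Finset.card_erase_of_mem hzB])
  have hf : ∀ i, (f i : V) ∈ A ∧ (f i : V) ∉ S := fun i => Finset.mem_sdiff.1 (f i).2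
  have hg : ∀ i, (g i : V) ∈ B ∧ (g i : V) ≠ z := fun i => (Finset.mem_erase.1 (g i).2).symm
  have hSet : (S : Set V) = {z} ∪ ↑(S.erase z) := by
    rw [Finset.coe_erase, Set.singleton_union, Set.insert_sdiff_singleton,
      Set.insert_eq_of_mem (Finset.mem_coe.2 hzS)]
  have h3 : 2 < (S : Set V).ncard := by rw [Set.ncard_coe_finset]; omega
  -- The `i`-th tree is the double star `z - f i - g i - (S \ {z})`.
  calc n = (Finset.univ : Finset (Fin n)).card := by simp
    _ ≤ tauLocal G S := by
      refine card_le_tauLocal_of_pairwiseDisjoint h3 _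
        (fun i => doubleStarSubgraph G (f i) (g i) {z} ↑(S.erase z))
        (fun i => {(f i : V), (g i : V)})
        (fun i _ => hSet ▸ ?_) (fun i _ => by rw [doubleStarSubgraph_verts, ← hSet])
        fun i _ j _ hij => ?_
      · refine isPendantSTree_doubleStarSubgraph (hAB _ (hf i).1 _ (hg i).1) ?_ ?_ ?_ ?_ ?_
        · simpa using hAB _ (hf i).1 _ hzB
        · intro l hl
          obtain ⟨hlz, hlS⟩ := Finset.mem_erase.1 hl
          exact (hAB l (hSA l hlS hlz) _ (hg i).1).symm
        · simpa using (hg i).2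
        · simp [(hf i).2]
        · simp
      · simp [Function.onFun, Ne.symm hij, hne _ (hf j).1 _ (hg i).1,
          (hne _ (hf i).1 _ (hg j).1).symm]

end Bicliques

section CompleteBipartite

variable {a b : ℕ}

theorem tauLocal_completeBipartiteGraph_le {p r : Fin a} (hpr : p ≠ r) (q : Fin b) :
    tauLocal (completeBipartiteGraph (Fin a) (Fin b))
      ↑({.inl p, .inl r, .inr q} : Finset (Fin a ⊕ Fin b)) ≤ a - 2 := by
  classical
  set S : Finset (Fin a ⊕ Fin b) := {.inl p, .inl r, .inr q}
  have hS : 2 < (S : Set (Fin a ⊕ Fin b)).ncard := by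
    rw [Set.ncard_coe_finset, Finset.card_insert_of_notMem (by simp [hpr]),
      Finset.card_pair (by simp)]
    omega
  have hnbr : (completeBipartiteGraph (Fin a) (Fin b)).neighborSet (.inr q) \ S ⊆
      ↑((Finset.univ \ {p, r}).map .inl : Finset (Fin a ⊕ Fin b)) := by
    rintro (v | v) <;> simp [S]
  refine tauLocal_le fun F hF => ?_
  calc F.card ≤ ((completeBipartiteGraph (Fin a) (Fin b)).neighborSet (.inr q) \ S).ncard :=
        hF.card_le_ncard_neighborSet_diff hS (by simp [S]) (Set.toFinite _)
    _ ≤ ((Finset.univ \ {p, r}).map .inl : Finset (Fin a ⊕ Fin b)).card :=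
        Set.ncard_coe_finset _ ▸ Set.ncard_le_ncard hnbr
    _ = a - 2 := by simp [Finset.card_sdiff, Finset.card_pair hpr]

theorem le_tauLocal_completeBipartiteGraph (hab : a ≤ b) (S : Finset (Fin a ⊕ Fin b))
    (hS : S.card = 3) : a - 2 ≤ tauLocal (completeBipartiteGraph (Fin a) (Fin b)) S := by
  set A : Finset (Fin a ⊕ Fin b) := Finset.univ.map .inl
  set B : Finset (Fin a ⊕ Fin b) := Finset.univ.map .inr
  have hAB : ∀ x ∈ A, ∀ y ∈ B, (completeBipartiteGraph (Fin a) (Fin b)).Adj x y := by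
    simp [A, B]
  have hBA : ∀ x ∈ B, ∀ y ∈ A, (completeBipartiteGraph (Fin a) (Fin b)).Adj x y :=
    fun x hx y hy => (hAB y hy x hx).symm
  have h3 : 2 < (S : Set (Fin a ⊕ Fin b)).ncard := by rw [Set.ncard_coe_finset]; omega
  have honeB : ∀ z ∈ S, z ∈ B → (∀ s ∈ S, s ≠ z → s ∈ A) →
      a - 2 ≤ tauLocal (completeBipartiteGraph (Fin a) (Fin b)) S := fun z hzS hzB hSA =>
    (le_tauLocal_of_biclique hAB hS.ge hzS hzB hSA).trans' (by simp [A, B, hS]; omega)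
  have honeA : ∀ z ∈ S, z ∈ A → (∀ s ∈ S, s ≠ z → s ∈ B) →
      a - 2 ≤ tauLocal (completeBipartiteGraph (Fin a) (Fin b)) S := fun z hzS hzA hSB =>
    (le_tauLocal_of_biclique hBA hS.ge hzS hzA hSB).trans' (by simp [A, B, hS]; omega)
  have hinA : (∀ s ∈ S, s ∈ A) → a - 2 ≤ tauLocal (completeBipartiteGraph (Fin a) (Fin b)) S :=
    fun hSA => (card_le_tauLocal_of_forall_adj h3 B fun c hc s hs => hBA c hc s (hSA s hs)).trans'
      (by simp [B]; omega)
  have hinB : (∀ s ∈ S, s ∈ B) → a - 2 ≤ tauLocal (completeBipartiteGraph (Fin a) (Fin b)) S :=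
    fun hSB => (card_le_tauLocal_of_forall_adj h3 A fun c hc s hs => hAB c hc s (hSB s hs)).trans'
      (by simp [A])
  obtain ⟨x, y, w, -, -, -, rfl⟩ := Finset.card_eq_three.1 hS
  rcases x with p | p <;> rcases y with q | q <;> rcases w with r | r
  · exact hinA (by simp [A])
  · exact honeB (.inr r) (by simp) (by simp [B]) (by simp [A])
  · exact honeB (.inr q) (by simp) (by simp [B]) (by simp [A])
  · exact honeA (.inl p) (by simp) (by simp [A]) (by simp [B])
  · exact honeB (.inr p) (by simp) (by simp [B]) (by simp [A])
  · exact honeA (.inl q) (by simp) (by simp [A]) (by simp [B])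
  · exact honeA (.inl r) (by simp) (by simp [A]) (by simp [B])
  · exact hinB (by simp [B])

end CompleteBipartite

/-- τ_3(K_{a,b}) = a - 2 for 2 ≤ a ≤ b. -/
theorem tau_three_completeBipartite (a b : ℕ) (ha : 2 ≤ a) (hab : a ≤ b) :
    tau (completeBipartiteGraph (Fin a) (Fin b)) 3 = a - 2 := by
  have hpr : (⟨0, by omega⟩ : Fin a) ≠ ⟨1, by omega⟩ := by simp
  exact tau_eq_of_forall_le_tauLocal (le_tauLocal_completeBipartiteGraph hab)
    (Finset.card_eq_three.2 ⟨_, _, .inr ⟨0, by omega⟩, by simp [hpr], by simp, by simp, rfl⟩)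
    (tauLocal_completeBipartiteGraph_le hpr _)
end
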